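/- arXiv:1211.6246 — 3 statements merged into one kernel-verified Lean document; each statement's English description precedes it below -/
import Mathlib

section
/- Let Λ be a lattice of full rank in ℝ^n and suppose B > 2ν(Λ). Then (B − 2ν(Λ))^n / det Λ ≤ |Λ ∩ [0,B)^n| ≤ (B + 2ν(Λ))^n / det Λ. -/
/-- The covering radius of a lattice: the supremum over `x` of the distance from `x`
to the nearest lattice point. -/
noncomputable def covRad {n : ℕ} (Λ : Submodule ℤ (EuclideanSpace ℝ (Fin n))) : ℝ :=
  ⨆ x : EuclideanSpace ℝ (Fin n), Metric.infDist x (Λ : Set (EuclideanSpace ℝ (Fin n)))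

/-- The half-open cube `[0, B)^n`. -/
def cube (n : ℕ) (B : ℝ) : Set (EuclideanSpace ℝ (Fin n)) :=
  {x | ∀ i, 0 ≤ x i ∧ x i < B}

/-!
Fix a fundamental domain `F` of `Λ`. Integrating over `x ∈ F` the number of points of the coset
`x + Λ` that lie in a measurable set `T` gives `vol T`. Some translation by a vector of length
`≤ ν` carries `x + Λ` onto `Λ`, so this number is at most `#(Λ ∩ S)` when the closed
`ν`-neighbourhood of `T` lies in `S`, and at least `#(Λ ∩ S)` when the `ν`-neighbourhood of `S`
lies in `T`. Hence `vol [ν, B - ν)^n ≤ #(Λ ∩ [0, B)^n) · det Λ ≤ vol [-ν, B + ν)^n`.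
-/

open MeasureTheory Metric Set ENNReal Pointwise

namespace AddSubgroup

section Counting

variable {G : Type*} [AddCommGroup G] (L : AddSubgroup G)

noncomputable def cosetCount (S : Set G) (x : G) : ℕ∞ :=
  {p : L | (p : G) + x ∈ S}.encard

theorem cosetCount_of_mem (S : Set G) {q : G} (hq : q ∈ L) :
    L.cosetCount S q = ((L : Set G) ∩ S).encard := by
  have hinj : Function.Injective fun p : L => (p : G) + q :=
    (add_left_injective q).comp Subtype.val_injective
  rw [cosetCount, ← hinj.encard_image]
  congr 1
  ext y
  refine ⟨?_, fun ⟨hyL, hyS⟩ => ⟨⟨y - q, L.sub_mem hyL hq⟩, by simpa using hyS, by simp⟩⟩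
  rintro ⟨p, hp, rfl⟩
  exact ⟨L.add_mem p.2 hq, hp⟩

theorem cosetCount_mono {S T : Set G} (h : S ⊆ T) (x : G) :
    L.cosetCount S x ≤ L.cosetCount T x :=
  encard_le_encard fun _ hp => h hp

variable [MeasurableSpace G] [MeasurableAdd G] {μ : Measure G} [μ.IsAddLeftInvariant]
  [Countable L] {F : Set G} {S : Set G}

theorem lintegral_cosetCount (hF : IsAddFundamentalDomain L F μ) (hS : MeasurableSet S) :
    ∫⁻ x in F, (L.cosetCount S x : ℝ≥0∞) ∂μ = μ S := by
  have hsum (x : G) : (L.cosetCount S x : ℝ≥0∞) = ∑' p : L, S.indicator 1 ((p : G) + x) := by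
    rw [cosetCount, ← tsum_set_one, tsum_subtype _ fun _ => 1]
    rfl
  have hmeas (p : L) : Measurable fun x => S.indicator (1 : G → ℝ≥0∞) ((p : G) + x) :=
    (measurable_one.indicator hS).comp (measurable_const_add _)
  simp_rw [hsum]
  rw [lintegral_tsum fun p => (hmeas p).aemeasurable, ← lintegral_indicator_one hS,
    hF.lintegral_eq_tsum'']
  rfl

theorem measure_le_mul_of_cosetCount_le (hF : IsAddFundamentalDomain L F μ)
    (hS : MeasurableSet S) {N : ℕ∞} (h : ∀ x, L.cosetCount S x ≤ N) : μ S ≤ N * μ F :=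
  calc μ S = ∫⁻ x in F, (L.cosetCount S x : ℝ≥0∞) ∂μ := (L.lintegral_cosetCount hF hS).symm
    _ ≤ ∫⁻ _ in F, (N : ℝ≥0∞) ∂μ := lintegral_mono fun x => ENat.toENNReal_le.mpr (h x)
    _ = N * μ F := setLIntegral_const F _

theorem mul_le_measure_of_le_cosetCount (hF : IsAddFundamentalDomain L F μ)
    (hS : MeasurableSet S) {N : ℕ∞} (h : ∀ x, N ≤ L.cosetCount S x) : N * μ F ≤ μ S :=
  calc (N : ℝ≥0∞) * μ F = ∫⁻ _ in F, (N : ℝ≥0∞) ∂μ := (setLIntegral_const F _).symm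
    _ ≤ ∫⁻ x in F, (L.cosetCount S x : ℝ≥0∞) ∂μ :=
      lintegral_mono fun x => ENat.toENNReal_le.mpr (h x)
    _ = μ S := L.lintegral_cosetCount hF hS

end Counting

theorem cosetCount_le_cosetCount_add_closedBall {G : Type*} [SeminormedAddCommGroup G]
    (L : AddSubgroup G) (S : Set G) {x y : G} {r : ℝ} (h : dist y x ≤ r) :
    L.cosetCount S x ≤ L.cosetCount (S + closedBall 0 r) y := by
  refine encard_le_encard fun p hp => ?_
  have hshift : (p : G) + y = (p + x) + (y - x) := by abel
  rw [mem_ofPred_eq, hshift]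
  exact add_mem_add hp (by simpa [dist_eq_norm] using h)

end AddSubgroup

namespace ZLattice

variable {E : Type*} [NormedAddCommGroup E] [NormedSpace ℝ E] [FiniteDimensional ℝ E]
  (L : Submodule ℤ E) [DiscreteTopology L] [IsZLattice ℝ L]

theorem bddAbove_range_infDist : BddAbove (range fun x : E => infDist x (L : Set E)) := by
  let b := (Module.Free.chooseBasis ℤ L).ofZLatticeBasis ℝ
  obtain ⟨R, hR⟩ := (ZSpan.fundamentalDomain_isBounded b).exists_norm_le
  refine ⟨R, forall_mem_range.mpr fun x => ?_⟩
  have hfloor : (ZSpan.floor b x : E) ∈ L :=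
    ((Module.Free.chooseBasis ℤ L).ofZLatticeBasis_span ℝ).le (ZSpan.floor b x).2
  calc infDist x L ≤ dist x (ZSpan.floor b x) := infDist_le_dist_of_mem hfloor
    _ = ‖ZSpan.fract b x‖ := by rw [dist_eq_norm, ZSpan.fract_apply]
    _ ≤ R := hR _ (ZSpan.fract_mem_fundamentalDomain b x)

instance : Countable L.toAddSubgroup := inferInstanceAs (Countable L)

variable [MeasurableSpace E] [BorelSpace E] (μ : Measure E) [μ.IsAddHaarMeasure]

theorem exists_isAddFundamentalDomain_measure_eq_covolume :
    ∃ F : Set E, IsAddFundamentalDomain L.toAddSubgroup F μ ∧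
      μ F = ENNReal.ofReal (covolume L μ) := by
  have hF := isAddFundamentalDomain (Module.Free.chooseBasis ℤ L) μ
  refine ⟨_, hF, ?_⟩
  rw [covolume_eq_measure_fundamentalDomain L μ hF,
    ofReal_measureReal (ZSpan.fundamentalDomain_isBounded _).measure_lt_top.ne]

variable {L μ} {r : ℝ} {S T : Set E}

theorem measure_le_encard_inter_mul_covolume (hcov : ∀ x : E, ∃ q ∈ L, dist x q ≤ r)
    (hT : MeasurableSet T) (hTS : T + closedBall 0 r ⊆ S) :
    μ T ≤ ((L : Set E) ∩ S).encard * ENNReal.ofReal (covolume L μ) := by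
  obtain ⟨F, hF, hμF⟩ := exists_isAddFundamentalDomain_measure_eq_covolume L μ
  rw [← hμF]
  refine L.toAddSubgroup.measure_le_mul_of_cosetCount_le hF hT fun x => ?_
  obtain ⟨q, hq, hxq⟩ := hcov x
  calc L.toAddSubgroup.cosetCount T x
      ≤ L.toAddSubgroup.cosetCount (T + closedBall 0 r) q :=
        L.toAddSubgroup.cosetCount_le_cosetCount_add_closedBall T (dist_comm x q ▸ hxq)
    _ ≤ L.toAddSubgroup.cosetCount S q := L.toAddSubgroup.cosetCount_mono hTS q
    _ = ((L : Set E) ∩ S).encard := L.toAddSubgroup.cosetCount_of_mem S hq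

theorem encard_inter_mul_covolume_le_measure (hcov : ∀ x : E, ∃ q ∈ L, dist x q ≤ r)
    (hT : MeasurableSet T) (hST : S + closedBall 0 r ⊆ T) :
    ((L : Set E) ∩ S).encard * ENNReal.ofReal (covolume L μ) ≤ μ T := by
  obtain ⟨F, hF, hμF⟩ := exists_isAddFundamentalDomain_measure_eq_covolume L μ
  rw [← hμF]
  refine L.toAddSubgroup.mul_le_measure_of_le_cosetCount hF hT fun x => ?_
  obtain ⟨q, hq, hxq⟩ := hcov x
  calc ((L : Set E) ∩ S).encard = L.toAddSubgroup.cosetCount S q :=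
        (L.toAddSubgroup.cosetCount_of_mem S hq).symm
    _ ≤ L.toAddSubgroup.cosetCount (S + closedBall 0 r) x :=
        L.toAddSubgroup.cosetCount_le_cosetCount_add_closedBall S hxq
    _ ≤ L.toAddSubgroup.cosetCount T x := L.toAddSubgroup.cosetCount_mono hST x

end ZLattice

section CoveringRadius

variable {n : ℕ} (Λ : Submodule ℤ (EuclideanSpace ℝ (Fin n))) [DiscreteTopology Λ]
  [IsZLattice ℝ Λ]

theorem infDist_le_covRad (x : EuclideanSpace ℝ (Fin n)) :
    infDist x (Λ : Set (EuclideanSpace ℝ (Fin n))) ≤ covRad Λ :=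
  le_ciSup (ZLattice.bddAbove_range_infDist Λ) x

theorem covRad_nonneg : 0 ≤ covRad Λ :=
  infDist_nonneg.trans (infDist_le_covRad Λ 0)

theorem exists_mem_dist_le_covRad (x : EuclideanSpace ℝ (Fin n)) :
    ∃ q ∈ Λ, dist x q ≤ covRad Λ := by
  have hclosed : IsClosed (Λ : Set (EuclideanSpace ℝ (Fin n))) :=
    @AddSubgroup.isClosed_of_discrete _ _ _ _ _ Λ.toAddSubgroup
      (inferInstanceAs (DiscreteTopology Λ))
  obtain ⟨q, hq, hxq⟩ := hclosed.exists_infDist_eq_dist ⟨0, Λ.zero_mem⟩ x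
  exact ⟨q, hq, hxq ▸ infDist_le_covRad Λ x⟩

end CoveringRadius

section Box

def box (n : ℕ) (a c : ℝ) : Set (EuclideanSpace ℝ (Fin n)) :=
  {x | ∀ i, a ≤ x i ∧ x i < c}

variable {n : ℕ}

theorem box_eq_preimage (a c : ℝ) : box n a c = WithLp.ofLp ⁻¹' univ.pi fun _ => Ico a c := by
  ext x
  simp [box, mem_pi, mem_Ico]

theorem measurableSet_box (a c : ℝ) : MeasurableSet (box n a c) := by
  rw [box_eq_preimage]
  exact (PiLp.volume_preserving_ofLp (Fin n)).measurable
    (MeasurableSet.univ_pi fun _ => measurableSet_Ico)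

theorem volume_box (a c : ℝ) : volume (box n a c) = ENNReal.ofReal (c - a) ^ n := by
  rw [box_eq_preimage, (PiLp.volume_preserving_ofLp (Fin n)).measure_preimage
    (MeasurableSet.univ_pi fun _ => measurableSet_Ico).nullMeasurableSet, volume_pi_pi]
  simp [Real.volume_Ico]

theorem box_add_closedBall_subset {a c a' c' r : ℝ} (ha : a' ≤ a - r) (hc : c + r ≤ c') :
    box n a c + closedBall 0 r ⊆ box n a' c' := by
  rintro _ ⟨x, hx, y, hy, rfl⟩ i
  have hyi : |y i| ≤ r := (PiLp.norm_apply_le y i).trans (mem_closedBall_zero_iff.mp hy)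
  obtain ⟨hxa, hxc⟩ := hx i
  simp only [PiLp.add_apply]
  constructor <;> linarith [abs_le.mp hyi]

end Box

theorem lattice_points_in_cube_bounds (n : ℕ) (Λ : Submodule ℤ (EuclideanSpace ℝ (Fin n)))
    [DiscreteTopology Λ] [IsZLattice ℝ Λ] (B : ℝ) (hB : B > 2 * covRad Λ) :
    (B - 2 * covRad Λ) ^ n / ZLattice.covolume Λ ≤
      (((Λ : Set (EuclideanSpace ℝ (Fin n))) ∩ cube n B).ncard : ℝ) ∧
    (((Λ : Set (EuclideanSpace ℝ (Fin n))) ∩ cube n B).ncard : ℝ) ≤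
      (B + 2 * covRad Λ) ^ n / ZLattice.covolume Λ := by
  set ν := covRad Λ
  set P := (Λ : Set (EuclideanSpace ℝ (Fin n))) ∩ cube n B
  have hν : 0 ≤ ν := covRad_nonneg Λ
  have hc : 0 < ZLattice.covolume Λ := ZLattice.covolume_pos Λ volume
  have hlow : ENNReal.ofReal (B - 2 * ν) ^ n ≤ P.encard * ENNReal.ofReal (ZLattice.covolume Λ) := by
    rw [show B - 2 * ν = B - ν - ν by ring, ← volume_box]
    exact ZLattice.measure_le_encard_inter_mul_covolume (exists_mem_dist_le_covRad Λ)
      (measurableSet_box _ _) (box_add_closedBall_subset (by linarith) (by linarith))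
  have hup : P.encard * ENNReal.ofReal (ZLattice.covolume Λ) ≤ ENNReal.ofReal (B + 2 * ν) ^ n := by
    rw [show B + 2 * ν = B + ν - -ν by ring, ← volume_box]
    exact ZLattice.encard_inter_mul_covolume_le_measure (exists_mem_dist_le_covRad Λ)
      (measurableSet_box _ _) (box_add_closedBall_subset (a := 0) (by linarith) (by linarith))
  have hP : P.Finite := encard_ne_top_iff.mp fun h => by
    simp [h, ENNReal.top_mul (ofReal_pos.mpr hc).ne'] at hup
  rw [← hP.cast_ncard_eq, ENat.toENNReal_coe, ← ofReal_natCast,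
    ← ofReal_mul (Nat.cast_nonneg _)] at hlow hup
  rw [← ofReal_pow (by linarith), ofReal_le_ofReal_iff (by positivity)] at hlow
  rw [← ofReal_pow (by linarith), ofReal_le_ofReal_iff (pow_nonneg (by linarith) n)] at hup
  rw [div_le_iff₀ hc, le_div_iff₀ hc]
  exact ⟨hlow, hup⟩
end

section
/- For every natural number n ≥ 1, the finite product ∏_{i=2}^{n+1} ζ(i)^{-1} is at least 0.434, where ζ denotes the Riemann zeta function. -/
/-!
As `ζ(i) ≥ 1`, the finite products increase with `n`, so it suffices to show
`∏_{i=2}^{N} ζ(i) ≤ 2.304` for every `N`. Comparing the tail `∑_{k>M} k^{-i}` with the telescoping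
series `∑ 1/(k(k+1))` bounds `ζ(i)` by its first `M` terms plus `1/(M (M+1)^{i-2})`. With `M = 20`
this gives `ζ(2)⋯ζ(10) ≤ 2.2976`; with `M = 2` it gives `ζ(i) ≤ 1 + 2^{1-i}` for `i ≥ 4`, whence
`∏_{i≥11} ζ(i) ≤ exp(2^{-9}) ≤ 512/511`.
-/

/-- The real Riemann zeta value `ζ(i) = ∑_{k=1}^∞ k^{-i}`. -/
noncomputable def zetaR (i : ℕ) : ℝ := ∑' k : ℕ, 1 / (k + 1 : ℝ) ^ i

open Finset

lemma summable_one_div_nat_add_one_pow {i : ℕ} (hi : 2 ≤ i) :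
    Summable fun k : ℕ => 1 / ((k : ℝ) + 1) ^ i := by
  have h := Real.summable_one_div_nat_pow.2 (by omega : 1 < i)
  simpa using (summable_nat_add_iff 1).2 h

lemma one_le_zetaR {i : ℕ} (hi : 2 ≤ i) : 1 ≤ zetaR i := by
  simpa [zetaR] using (summable_one_div_nat_add_one_pow hi).le_tsum 0 fun k _ => by positivity

lemma zetaR_pos {i : ℕ} (hi : 2 ≤ i) : 0 < zetaR i :=
  zero_lt_one.trans_le (one_le_zetaR hi)

lemma one_div_add_one_pow_le_sub (j : ℕ) {m x : ℝ} (hm : 0 < m) (hmx : m ≤ x) :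
    1 / (x + 1) ^ (j + 2) ≤ (1 / x - 1 / (x + 1)) / (m + 1) ^ j := by
  have hx : 0 < x := hm.trans_le hmx
  have hsub : 1 / x - 1 / (x + 1) = 1 / (x * (x + 1)) := by field_simp; ring
  rw [hsub, div_div, one_div_le_one_div (by positivity) (by positivity), mul_comm, pow_add]
  exact mul_le_mul (by gcongr) (by nlinarith) (by positivity) (by positivity)

lemma tsum_one_div_nat_add_pow_le (j : ℕ) {M : ℕ} (hM : 0 < M) :
    ∑' k : ℕ, 1 / (((k + M : ℕ) : ℝ) + 1) ^ (j + 2) ≤ 1 / (M : ℝ) / ((M : ℝ) + 1) ^ j := by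
  have hM' : (0 : ℝ) < M := by exact_mod_cast hM
  refine Real.tsum_le_of_sum_range_le (fun _ => by positivity) fun n => ?_
  set u : ℕ → ℝ := fun k => 1 / ((k : ℝ) + M)
  calc ∑ k ∈ range n, 1 / (((k + M : ℕ) : ℝ) + 1) ^ (j + 2)
      ≤ ∑ k ∈ range n, (u k - u (k + 1)) / ((M : ℝ) + 1) ^ j := by
        refine sum_le_sum fun k _ => ?_
        have h := one_div_add_one_pow_le_sub j hM' (le_add_of_nonneg_left k.cast_nonneg)
        simp only [u]
        push_cast
        rwa [add_right_comm (k : ℝ) 1]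
    _ = (u 0 - u n) / ((M : ℝ) + 1) ^ j := by rw [← sum_div, sum_range_sub']
    _ ≤ 1 / (M : ℝ) / ((M : ℝ) + 1) ^ j := by
        gcongr
        simp only [u, Nat.cast_zero, zero_add, sub_le_self_iff]
        positivity

lemma zetaR_le_sum_range_add (j : ℕ) {M : ℕ} (hM : 0 < M) :
    zetaR (j + 2) ≤ ∑ k ∈ range M, 1 / ((k : ℝ) + 1) ^ (j + 2)
      + 1 / (M : ℝ) / ((M : ℝ) + 1) ^ j := by
  rw [zetaR, ← (summable_one_div_nat_add_one_pow (by omega : 2 ≤ j + 2)).sum_add_tsum_nat_add M]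
  simpa using tsum_one_div_nat_add_pow_le j hM

lemma zetaR_le_one_add_two_mul_half_pow {i : ℕ} (hi : 4 ≤ i) :
    zetaR i ≤ 1 + 2 * (1 / 2) ^ i := by
  obtain ⟨j, rfl⟩ : ∃ j, i = j + 4 := ⟨i - 4, by omega⟩
  have h : zetaR (j + 4) ≤ 1 + 1 / 2 ^ (j + 4) + 1 / 2 / 3 ^ (j + 2) := by
    convert zetaR_le_sum_range_add (j + 2) (M := 2) (by norm_num) using 2
    · norm_num [sum_range_succ]
    · norm_num
  have htail : 1 / 2 / (3 : ℝ) ^ (j + 2) ≤ 1 / 2 ^ (j + 4) := by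
    have hpow : (2 : ℝ) ^ j ≤ 3 ^ j := pow_le_pow_left₀ (by norm_num) (by norm_num) j
    rw [div_div, one_div_le_one_div (by positivity) (by positivity), pow_add, pow_add]
    norm_num
    linarith [pow_nonneg (by norm_num : (0 : ℝ) ≤ 3) j]
  calc zetaR (j + 4) ≤ 1 + 1 / 2 ^ (j + 4) + 1 / 2 ^ (j + 4) := by linarith
    _ = 1 + 2 * (1 / 2) ^ (j + 4) := by rw [one_div_pow]; ring

lemma prod_Ico_zetaR_le_exp {m : ℕ} (hm : 4 ≤ m) (n : ℕ) :
    ∏ i ∈ Ico m n, zetaR i ≤ Real.exp (4 * (1 / 2) ^ m) := by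
  calc ∏ i ∈ Ico m n, zetaR i ≤ ∏ i ∈ Ico m n, (1 + 2 * (1 / 2 : ℝ) ^ i) := by
        refine prod_le_prod (fun i hi => ?_) fun i hi => ?_
        · exact (zetaR_pos (by grind)).le
        · exact zetaR_le_one_add_two_mul_half_pow (by grind)
    _ ≤ Real.exp (∑ i ∈ Ico m n, 2 * (1 / 2 : ℝ) ^ i) :=
        Real.prod_one_add_le_exp_sum _ fun i => by positivity
    _ ≤ Real.exp (4 * (1 / 2) ^ m) := by
        have hgeom := geom_sum_Ico_le_of_lt_one (x := (1 / 2 : ℝ)) (m := m) (n := n)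
          (by norm_num) (by norm_num)
        rw [← mul_sum, Real.exp_le_exp]
        norm_num at hgeom
        linarith

/-- `ζ(i)` rounded up to four decimals; each value is certified by the first twenty terms of the
series and the tail bound `zetaR_le_sum_range_add`. -/
noncomputable def zetaUpper : ℕ → ℝ
  | 2 => 1.6462
  | 3 => 1.2033
  | 4 => 1.0824
  | 5 => 1.0370
  | 6 => 1.0174
  | 7 => 1.0084
  | 8 => 1.0041
  | 9 => 1.0021
  | 10 => 1.0010
  | _ => 1

lemma zetaR_le_zetaUpper {i : ℕ} (h2 : 2 ≤ i) (h10 : i ≤ 10) : zetaR i ≤ zetaUpper i := by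
  obtain ⟨j, rfl⟩ : ∃ j, i = j + 2 := ⟨i - 2, by omega⟩
  refine (zetaR_le_sum_range_add j (M := 20) (by norm_num)).trans ?_
  have hj : j ≤ 8 := by omega
  interval_cases j <;> norm_num [sum_range_succ, zetaUpper]

lemma prod_Ico_two_eleven_zetaR_le : ∏ i ∈ Ico 2 11, zetaR i ≤ 2.2976 := by
  calc ∏ i ∈ Ico 2 11, zetaR i ≤ ∏ i ∈ Ico 2 11, zetaUpper i := by
        refine prod_le_prod (fun i hi => ?_) fun i hi => ?_
        · exact (zetaR_pos (mem_Ico.1 hi).1).le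
        · exact zetaR_le_zetaUpper (mem_Ico.1 hi).1 (by grind)
    _ ≤ 2.2976 := by norm_num [prod_Ico_eq_prod_range, prod_range_succ, zetaUpper]

lemma prod_Ico_two_zetaR_le (N : ℕ) : ∏ i ∈ Ico 2 N, zetaR i ≤ 2.304 := by
  have hext : ∏ i ∈ Ico 2 N, zetaR i ≤ ∏ i ∈ Ico 2 (max N 11), zetaR i :=
    prod_le_prod_of_subset_of_one_le (Ico_subset_Ico_right (le_max_left N 11))
      (fun i hi => (zetaR_pos (mem_Ico.1 hi).1).le)
      (fun i hi _ => one_le_zetaR (mem_Ico.1 hi).1)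
  rw [← prod_Ico_consecutive _ (by norm_num : 2 ≤ 11) (le_max_right N 11)] at hext
  calc ∏ i ∈ Ico 2 N, zetaR i
      ≤ 2.2976 * Real.exp (4 * (1 / 2) ^ 11) :=
        hext.trans (mul_le_mul prod_Ico_two_eleven_zetaR_le (prod_Ico_zetaR_le_exp (by norm_num) _)
          (prod_nonneg fun i hi => (zetaR_pos (by grind)).le)
          (by norm_num))
    _ ≤ 2.2976 * (1 / (1 - 4 * (1 / 2) ^ 11)) := by
        gcongr
        exact Real.exp_bound_div_one_sub_of_interval (by norm_num) (by norm_num)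
    _ ≤ 2.304 := by norm_num

theorem zeta_inv_prod_ge_general (n : ℕ) :
    ∏ i ∈ Finset.Icc 2 (n + 1), (zetaR i)⁻¹ ≥ 0.434 := by
  rw [prod_inv_distrib, ← Ico_add_one_right_eq_Icc, ge_iff_le]
  calc (0.434 : ℝ) ≤ 2.304⁻¹ := by norm_num
    _ ≤ _ := inv_anti₀ (prod_pos fun i hi => zetaR_pos (mem_Ico.1 hi).1)
        (prod_Ico_two_zetaR_le _)

theorem zeta_inv_prod_ge (n : ℕ) (hn : 1 ≤ n) :
    ∏ i ∈ Finset.Icc 2 (n + 1), (zetaR i)⁻¹ ≥ 0.434 :=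
  zeta_inv_prod_ge_general n
end

section
/- For every natural number n ≥ 1, one has |Σ_{k=1}^n φ(k) − 3n²/π²| ≤ (3/2)n + n·log n, where φ is Euler's totient function and log is the natural logarithm. -/
/-!
Möbius inversion `φ = μ ⋆ id` and an interchange of summations give
`∑_{k ≤ n} φ k = ∑_{d ≤ n} μ d · T ⌊n/d⌋` with `T q = q (q + 1) / 2`. Replacing `T ⌊n/d⌋` by
`(n/d)² / 2` costs at most `n / (2d)` per term, so at most `(n/2)(1 + log n)` in total. What remains
is `(n²/2) ∑_{d ≤ n} μ d / d²`, whose series is `1/ζ(2) = 6/π²` with tail at most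
`∑_{d > n} 1/d² ≤ 2/(n + 1)`, costing at most `n`.
-/

open Finset ArithmeticFunction Real
open scoped ArithmeticFunction.Moebius Nat

lemma hasSum_moebius_div_sq : HasSum (fun d : ℕ ↦ (μ d : ℝ) / d ^ 2) (6 / π ^ 2) := by
  have h2 : 1 < (2 : ℂ).re := by norm_num
  have hL : LSeries (fun n ↦ (μ n : ℂ)) 2 = 6 / π ^ 2 := by
    have := LSeries_one_mul_Lseries_moebius h2
    rw [LSeries_one_eq_riemannZeta h2, riemannZeta_two] at this
    have hπ : (π : ℂ) ≠ 0 := by exact_mod_cast pi_ne_zero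
    field_simp at this ⊢
    linear_combination this
  have hsum : HasSum (LSeries.term (fun n ↦ (μ n : ℂ)) 2) (6 / π ^ 2) :=
    hL ▸ (LSeriesSummable_moebius_iff.2 h2).LSeriesHasSum
  refine Complex.hasSum_ofReal.1 ?_
  convert hsum using 1
  · ext d
    rcases eq_or_ne d 0 with rfl | hd
    · simp
    · simp [LSeries.term_of_ne_zero hd]
  · push_cast; rfl

lemma totient_eq_moebius_mul_id {R : Type*} [Ring R] (n : ℕ) :
    (φ n : R) = (↑μ * ↑ArithmeticFunction.id : ArithmeticFunction R) n := by
  rcases n.eq_zero_or_pos with rfl | hn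
  · simp
  rw [mul_apply]
  refine ((sum_eq_iff_sum_mul_moebius_eq (f := fun m ↦ (φ m : R)) (g := fun m ↦ (m : R))).1
    (fun m _ ↦ ?_) n hn).symm.trans ?_
  · rw [← Nat.cast_sum, Nat.sum_totient]
  · simp

lemma sum_Icc_totient_eq {R : Type*} [Ring R] (N : ℕ) :
    ∑ k ∈ Icc 1 N, (φ k : R) = ∑ d ∈ Icc 1 N, (μ d : R) * ∑ m ∈ Icc 1 (N / d), (m : R) := by
  have hIcc : ∀ M, Icc 1 M = Ioc 0 M := Icc_add_one_left_eq_Ioc 0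
  simp_rw [hIcc, totient_eq_moebius_mul_id, sum_Ioc_mul_eq_sum_sum]
  simp

lemma sum_Icc_one_natCast (q : ℕ) : ∑ m ∈ Icc 1 q, (m : ℝ) = q * (q + 1) / 2 := by
  induction q with
  | zero => simp
  | succ q ih => rw [sum_Icc_succ_top (by omega), ih]; push_cast; ring

lemma abs_sum_Icc_floor_sub_sq_le {x : ℝ} (hx : 0 ≤ x) :
    |∑ m ∈ Icc 1 ⌊x⌋₊, (m : ℝ) - x ^ 2 / 2| ≤ x / 2 := by
  rw [sum_Icc_one_natCast, abs_le]
  have h1 := Nat.floor_le hx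
  have h2 := Nat.lt_floor_add_one x
  constructor <;> nlinarith

lemma abs_sub_sum_Icc_le_of_abs_le_inv_sq {f : ℕ → ℝ} {s : ℝ} (hs : HasSum f s)
    (hf : ∀ d, |f d| ≤ ((d : ℝ) ^ 2)⁻¹) (N : ℕ) :
    |s - ∑ d ∈ Icc 1 N, f d| ≤ 2 / (N + 1) := by
  -- at `d = 0` the hypothesis reads `|f 0| ≤ 0⁻¹ = 0`
  have hf0 : f 0 = 0 := abs_nonpos_iff.1 (by simpa using hf 0)
  have hN : ∑ d ∈ Icc 1 N, f d = ∑ d ∈ range (N + 1), f d := by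
    rw [Nat.range_succ_eq_Icc_zero, Icc_eq_cons_Ioc N.zero_le, sum_cons, hf0, zero_add,
      ← Icc_add_one_left_eq_Ioc, zero_add]
  have hpartial :
      ∀ M ≥ N + 1, |∑ d ∈ range M, f d - ∑ d ∈ range (N + 1), f d| ≤ 2 / (N + 1) := by
    intro M hM
    rw [← sum_Ico_eq_sub _ hM]
    calc _ ≤ ∑ d ∈ Ico (N + 1) M, |f d| := abs_sum_le_sum_abs _ _
      _ ≤ ∑ d ∈ Ioo N M, ((d : ℝ) ^ 2)⁻¹ := by
        rw [← Ico_add_one_left_eq_Ioo]; exact sum_le_sum fun d _ ↦ hf d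
      _ ≤ 2 / (N + 1) := sum_Ioo_inv_sq_le N M
  rw [hN]
  exact le_of_tendsto (hs.tendsto_sum_nat.sub_const _).abs
    (Filter.eventually_atTop.2 ⟨N + 1, hpartial⟩)

lemma abs_moebius_div_sq_le (d : ℕ) : |(μ d : ℝ) / d ^ 2| ≤ ((d : ℝ) ^ 2)⁻¹ := by
  rw [abs_div, abs_of_nonneg (sq_nonneg (d : ℝ)), div_eq_mul_inv]
  exact mul_le_of_le_one_left (by positivity) (mod_cast abs_moebius_le_one)

lemma abs_six_div_pi_sq_sub_sum_moebius_div_sq_le (N : ℕ) :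
    |6 / π ^ 2 - ∑ d ∈ Icc 1 N, (μ d : ℝ) / d ^ 2| ≤ 2 / (N + 1 : ℝ) :=
  abs_sub_sum_Icc_le_of_abs_le_inv_sq hasSum_moebius_div_sq abs_moebius_div_sq_le N

lemma abs_sum_moebius_mul_sum_Icc_sub_le (n : ℕ) :
    |∑ d ∈ Icc 1 n, (μ d : ℝ) * (∑ m ∈ Icc 1 (n / d), (m : ℝ) - ((n : ℝ) / d) ^ 2 / 2)|
      ≤ n / 2 * (1 + Real.log n) := by
  have hharmonic : ∑ d ∈ Icc 1 n, (d : ℝ)⁻¹ ≤ 1 + Real.log n := by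
    simpa [harmonic_eq_sum_Icc] using harmonic_le_one_add_log n
  calc _ ≤ ∑ d ∈ Icc 1 n, |(μ d : ℝ) * (∑ m ∈ Icc 1 (n / d), (m : ℝ) - ((n : ℝ) / d) ^ 2 / 2)| :=
        abs_sum_le_sum_abs _ _
    _ ≤ ∑ d ∈ Icc 1 n, n / 2 * (d : ℝ)⁻¹ := by
        refine sum_le_sum fun d _ ↦ ?_
        rw [abs_mul, ← Nat.floor_div_eq_div (K := ℝ)]
        calc _ ≤ 1 * ((n : ℝ) / d / 2) := mul_le_mul (mod_cast abs_moebius_le_one)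
              (abs_sum_Icc_floor_sub_sq_le (by positivity)) (abs_nonneg _) zero_le_one
          _ = _ := by ring
    _ ≤ n / 2 * (1 + Real.log n) := by rw [← mul_sum]; gcongr

theorem totient_sum_estimate_general (n : ℕ) :
    |(∑ k ∈ Finset.Icc 1 n, (Nat.totient k : ℝ)) - 3 * (n : ℝ) ^ 2 / Real.pi ^ 2| ≤
      3 / 2 * (n : ℝ) + (n : ℝ) * Real.log n := by
  have hdecomp : ∑ k ∈ Icc 1 n, (φ k : ℝ) - 3 * (n : ℝ) ^ 2 / π ^ 2
      = ∑ d ∈ Icc 1 n, (μ d : ℝ) * (∑ m ∈ Icc 1 (n / d), (m : ℝ) - ((n : ℝ) / d) ^ 2 / 2)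
        - n ^ 2 / 2 * (6 / π ^ 2 - ∑ d ∈ Icc 1 n, (μ d : ℝ) / d ^ 2) := by
    have hterm : ∀ d : ℕ, (μ d : ℝ) * (((n : ℝ) / d) ^ 2 / 2) = n ^ 2 / 2 * (μ d / d ^ 2) := by
      intro d; ring
    rw [sum_Icc_totient_eq]
    simp only [mul_sub, sum_sub_distrib, hterm, ← mul_sum]
    ring
  have htail : |(n : ℝ) ^ 2 / 2 * (6 / π ^ 2 - ∑ d ∈ Icc 1 n, (μ d : ℝ) / d ^ 2)| ≤ (n : ℝ) := by
    rw [abs_mul, abs_of_nonneg (by positivity : (0 : ℝ) ≤ n ^ 2 / 2)]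
    calc _ ≤ (n : ℝ) ^ 2 / 2 * (2 / (n + 1)) := by
          gcongr; exact abs_six_div_pi_sq_sub_sum_moebius_div_sq_le n
      _ ≤ n := by rw [mul_div_assoc', div_le_iff₀ (by positivity)]; nlinarith
  rw [hdecomp]
  calc _ ≤ _ := abs_sub _ _
    _ ≤ n / 2 * (1 + Real.log n) + n :=
        add_le_add (abs_sum_moebius_mul_sum_Icc_sub_le n) htail
    _ ≤ _ := by linarith [mul_nonneg n.cast_nonneg (log_natCast_nonneg n)]

theorem totient_sum_estimate (n : ℕ) (hn : 1 ≤ n) :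
    |(∑ k ∈ Finset.Icc 1 n, (Nat.totient k : ℝ)) - 3 * (n : ℝ) ^ 2 / Real.pi ^ 2| ≤
      3 / 2 * (n : ℝ) + (n : ℝ) * Real.log n :=
  totient_sum_estimate_general n
end
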